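/- arXiv:1905.10081 — 4 statements merged into one kernel-verified Lean document; each statement's English description precedes it below -/
import Mathlib

section
/- Let (X_k)_{k>0} be a sequence of finite connected d-regular graphs with |V_k| → ∞, let X = ⊔_k X_k be a coarse disjoint union, and let B be a Banach space. Assume there is C > 0 such that for every map f : X → B and every k: (1/|V_k|²) Σ_{x,y∈V_k} ‖f(x) − f(y)‖² ≤ (C/|V_k|) Σ_{x∼y in X_k} ‖f(x) − f(y)‖². Then there is no coarse embedding of X into B; that is, there do not exist a map f : X → B and functions ρ₋, ρ₊ : ℝ₊ → ℝ₊ with ρ₋(t) → ∞ as t → ∞, such that ρ₋(d(x,y)) ≤ ‖f(x) − f(y)‖ ≤ ρ₊(d(x,y)) for all x, y ∈ X. -/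
open Filter Finset

lemma ball_card_le {V : Type*} [Fintype V] (G : SimpleGraph V) [DecidableRel G.Adj]
    (hconn : G.Connected) (d : ℕ) (hdeg : ∀ v, G.degree v ≤ d)
    (x : V) : ∀ r : ℕ,
    (Finset.univ.filter (fun y => G.dist x y ≤ r)).card ≤ (d + 1) ^ r := by
  classical
  intro r
  induction r with
  | zero =>
    have hsub : (Finset.univ.filter (fun y => G.dist x y ≤ 0)) ⊆ {x} := by
      intro y hy
      simp only [Finset.mem_filter, Nat.le_zero] at hy
      have hr := hconn.preconnected x y
      simp only [Finset.mem_singleton]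
      exact ((hr.dist_eq_zero_iff).mp hy.2).symm
    calc _ ≤ ({x} : Finset V).card := Finset.card_le_card hsub
    _ ≤ (d + 1) ^ 0 := by simp
  | succ r ih =>
    have hsub : (Finset.univ.filter (fun y => G.dist x y ≤ r + 1)) ⊆
        (Finset.univ.filter (fun y => G.dist x y ≤ r)).biUnion
          (fun z => insert z (G.neighborFinset z)) := by
      intro y hy
      simp only [Finset.mem_filter, Finset.mem_univ, true_and] at hy
      rcases Nat.lt_or_ge (G.dist x y) (r + 1) with h | h
      · exact Finset.mem_biUnion.mpr ⟨y, by simp [Nat.lt_succ_iff.mp h], by simp⟩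
      · have hd : G.dist x y = r + 1 := le_antisymm hy h
        obtain ⟨p, hp⟩ := hconn.exists_walk_length_eq_dist x y
        have hnn : ¬ p.reverse.Nil := by
          rw [SimpleGraph.Walk.not_nil_iff_lt_length]
          simp [hp, hd]
        obtain ⟨z, hadj, q, hq⟩ := SimpleGraph.Walk.not_nil_iff.mp hnn
        have hql : q.length = r := by
          have h2 := congrArg SimpleGraph.Walk.length hq
          simp only [SimpleGraph.Walk.length_reverse, SimpleGraph.Walk.length_cons, hp, hd] at h2
          omega
        have hdz : G.dist x z ≤ r := by
          rw [SimpleGraph.dist_comm]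
          exact hql ▸ SimpleGraph.dist_le q
        refine Finset.mem_biUnion.mpr ⟨z, by simp [hdz], ?_⟩
        simp [SimpleGraph.mem_neighborFinset, hadj.symm]
    calc _ ≤ _ := Finset.card_le_card hsub
    _ ≤ ∑ z ∈ Finset.univ.filter (fun y => G.dist x y ≤ r),
          (insert z (G.neighborFinset z)).card := Finset.card_biUnion_le
    _ ≤ ∑ z ∈ Finset.univ.filter (fun y => G.dist x y ≤ r), (d + 1) := by
        refine Finset.sum_le_sum fun z _ => ?_
        calc (insert z (G.neighborFinset z)).card ≤ (G.neighborFinset z).card + 1 :=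
              Finset.card_insert_le _ _
        _ ≤ d + 1 := by
            have := hdeg z
            rw [SimpleGraph.card_neighborFinset_eq_degree]
            omega
    _ ≤ (d + 1) ^ r * (d + 1) := by
        rw [Finset.sum_const, smul_eq_mul]
        exact Nat.mul_le_mul_right _ ih
    _ = (d + 1) ^ (r + 1) := (pow_succ _ _).symm

/-- If a coarse disjoint union of finite connected `d`-regular graphs with
`|V_k| → ∞` satisfies a Poincaré inequality with respect to a Banach space
`B`, then it admits no coarse embedding into `B`. -/
theorem stmt_6 (d : ℕ) {V : ℕ → Type*} [∀ k, Fintype (V k)]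
    (G : ∀ k, SimpleGraph (V k)) [∀ k, DecidableRel (G k).Adj]
    (hconn : ∀ k, (G k).Connected) (hreg : ∀ k, (G k).IsRegularOfDegree d)
    (hcard : Tendsto (fun k => Fintype.card (V k)) atTop atTop)
    (D : (Σ k, V k) → (Σ k, V k) → ℝ)
    (hsymmD : ∀ p q, D p q = D q p)
    (hzeroD : ∀ p, D p p = 0)
    (htriD : ∀ p q r, D p r ≤ D p q + D q r)
    (hrestrict : ∀ (k : ℕ) (x y : V k), D ⟨k, x⟩ ⟨k, y⟩ = ((G k).dist x y : ℝ))
    (hsep : ∀ (k l : ℕ), k ≠ l → ∀ (x : V k) (y : V l),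
      (((Finset.univ ×ˢ Finset.univ : Finset (V k × V k)).sup
          (fun p => (G k).dist p.1 p.2) : ℕ) : ℝ) +
      (((Finset.univ ×ˢ Finset.univ : Finset (V l × V l)).sup
          (fun p => (G l).dist p.1 p.2) : ℕ) : ℝ) ≤ D ⟨k, x⟩ ⟨l, y⟩)
    {B : Type*} [NormedAddCommGroup B] [NormedSpace ℝ B] [CompleteSpace B]
    (C : ℝ) (hC : 0 < C)
    (hPoincare : ∀ (f : (Σ k, V k) → B) (k : ℕ),
      (1 / (Fintype.card (V k) : ℝ) ^ 2) *
          ∑ x, ∑ y, ‖f ⟨k, x⟩ - f ⟨k, y⟩‖ ^ 2 ≤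
      (C / (Fintype.card (V k) : ℝ)) *
          ∑ x, ∑ y ∈ (G k).neighborFinset x, ‖f ⟨k, x⟩ - f ⟨k, y⟩‖ ^ 2) :
    ¬ ∃ (f : (Σ k, V k) → B) (ρm ρp : ℝ → ℝ),
        Tendsto ρm atTop atTop ∧
        ∀ p q, ρm (D p q) ≤ ‖f p - f q‖ ∧ ‖f p - f q‖ ≤ ρp (D p q) := by
  classical
  rintro ⟨f, ρm, ρp, hρm, hcontrol⟩
  set A : ℝ := ρp 1 with hA
  set M : ℝ := Real.sqrt (2 * (C * d * A ^ 2 + 1)) with hM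
  have hMnn : 0 ≤ M := Real.sqrt_nonneg _
  have hM2 : M ^ 2 = 2 * (C * d * A ^ 2 + 1) :=
    Real.sq_sqrt (by positivity)
  obtain ⟨t0, ht0⟩ := (tendsto_atTop_atTop.mp hρm) M
  set r : ℕ := ⌈t0⌉₊ with hr
  obtain ⟨k0, hk0⟩ := (tendsto_atTop_atTop.mp hcard) (2 * (d + 1) ^ r)
  set k := k0 with hk
  have hn : 2 * (d + 1) ^ r ≤ Fintype.card (V k) := hk0 k le_rfl
  set n : ℕ := Fintype.card (V k) with hnn'
  have hnpos : 0 < n := lt_of_lt_of_le (by positivity) hn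
  have hnR : (0 : ℝ) < n := by exact_mod_cast hnpos
  -- edge bound
  have hedge : ∀ x y : V k, (G k).Adj x y → ‖f ⟨k, x⟩ - f ⟨k, y⟩‖ ≤ A := by
    intro x y hxy
    have h1 : (G k).dist x y = 1 := SimpleGraph.dist_eq_one_iff_adj.mpr hxy
    have := (hcontrol ⟨k, x⟩ ⟨k, y⟩).2
    rwa [hrestrict, h1, Nat.cast_one] at this
  -- RHS bound
  have hRHS : (C / (n : ℝ)) * ∑ x, ∑ y ∈ (G k).neighborFinset x,
      ‖f ⟨k, x⟩ - f ⟨k, y⟩‖ ^ 2 ≤ C * d * A ^ 2 := by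
    have hin : ∀ x : V k, ∑ y ∈ (G k).neighborFinset x,
        ‖f ⟨k, x⟩ - f ⟨k, y⟩‖ ^ 2 ≤ d * A ^ 2 := by
      intro x
      calc ∑ y ∈ (G k).neighborFinset x, ‖f ⟨k, x⟩ - f ⟨k, y⟩‖ ^ 2
          ≤ ∑ y ∈ (G k).neighborFinset x, A ^ 2 := by
            refine Finset.sum_le_sum fun y hy => ?_
            exact pow_le_pow_left₀ (norm_nonneg _)
              (hedge x y ((SimpleGraph.mem_neighborFinset _ _ _).mp hy)) 2
        _ = ((G k).neighborFinset x).card * A ^ 2 := by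
            rw [Finset.sum_const, nsmul_eq_mul]
        _ = d * A ^ 2 := by
            rw [SimpleGraph.card_neighborFinset_eq_degree, hreg k x]
    calc (C / (n : ℝ)) * ∑ x, ∑ y ∈ (G k).neighborFinset x, ‖f ⟨k, x⟩ - f ⟨k, y⟩‖ ^ 2
        ≤ (C / (n : ℝ)) * ∑ x : V k, ((d : ℝ) * A ^ 2) := by
          refine mul_le_mul_of_nonneg_left (Finset.sum_le_sum fun x _ => hin x) ?_
          positivity
      _ = (C / (n : ℝ)) * ((n : ℝ) * ((d : ℝ) * A ^ 2)) := by
          rw [Finset.sum_const, nsmul_eq_mul, Finset.card_univ]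
      _ = C * d * A ^ 2 := by field_simp
  -- LHS bound
  have hLHS : M ^ 2 / 2 ≤ (1 / (n : ℝ) ^ 2) * ∑ x, ∑ y,
      ‖f ⟨k, x⟩ - f ⟨k, y⟩‖ ^ 2 := by
    have hterm : ∀ x : V k, ((n : ℝ) / 2) * M ^ 2 ≤ ∑ y, ‖f ⟨k, x⟩ - f ⟨k, y⟩‖ ^ 2 := by
      intro x
      set T := Finset.univ.filter (fun y => ¬ (G k).dist x y ≤ r) with hT
      have hball := ball_card_le (G k) (hconn k) d (fun v => le_of_eq (hreg k v)) x r
      have hsplit := Finset.card_filter_add_card_filter_not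
        (s := (Finset.univ : Finset (V k))) (p := fun y => (G k).dist x y ≤ r)
      have hTcard : ((n : ℝ) / 2) ≤ (T.card : ℝ) := by
        rw [Finset.card_univ] at hsplit
        have hTeq : T.card =
            (Finset.univ.filter (fun a => ¬ (G k).dist x a ≤ r)).card := rfl
        have h1 : (d + 1) ^ r + T.card ≥ n := by omega
        have h2 : ((d : ℝ) + 1) ^ r + (T.card : ℝ) ≥ (n : ℝ) := by exact_mod_cast h1
        have h3 : (2 : ℝ) * ((d : ℝ) + 1) ^ r ≤ (n : ℝ) := by exact_mod_cast hn
        linarith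
      have hTbound : ∀ y ∈ T, M ^ 2 ≤ ‖f ⟨k, x⟩ - f ⟨k, y⟩‖ ^ 2 := by
        intro y hy
        simp only [hT, Finset.mem_filter, Finset.mem_univ, true_and, not_le] at hy
        have hD : t0 ≤ D ⟨k, x⟩ ⟨k, y⟩ := by
          rw [hrestrict]
          have h1 : (r : ℝ) ≤ ((G k).dist x y : ℝ) := by exact_mod_cast le_of_lt hy
          linarith [Nat.le_ceil t0]
        have hMle : M ≤ ‖f ⟨k, x⟩ - f ⟨k, y⟩‖ :=
          le_trans (ht0 _ hD) (hcontrol ⟨k, x⟩ ⟨k, y⟩).1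
        exact pow_le_pow_left₀ hMnn hMle 2
      calc ((n : ℝ) / 2) * M ^ 2 ≤ (T.card : ℝ) * M ^ 2 :=
            mul_le_mul_of_nonneg_right hTcard (sq_nonneg M)
        _ = ∑ _y ∈ T, M ^ 2 := by rw [Finset.sum_const, nsmul_eq_mul]
        _ ≤ ∑ y ∈ T, ‖f ⟨k, x⟩ - f ⟨k, y⟩‖ ^ 2 := Finset.sum_le_sum hTbound
        _ ≤ ∑ y, ‖f ⟨k, x⟩ - f ⟨k, y⟩‖ ^ 2 :=
            Finset.sum_le_sum_of_subset_of_nonneg (Finset.filter_subset _ _)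
              (fun y _ _ => sq_nonneg _)
    calc M ^ 2 / 2 = (1 / (n : ℝ) ^ 2) * ((n : ℝ) * (((n : ℝ) / 2) * M ^ 2)) := by
          field_simp
      _ ≤ (1 / (n : ℝ) ^ 2) * ∑ x, ∑ y, ‖f ⟨k, x⟩ - f ⟨k, y⟩‖ ^ 2 := by
          refine mul_le_mul_of_nonneg_left ?_ (by positivity)
          calc (n : ℝ) * (((n : ℝ) / 2) * M ^ 2)
              = ∑ _x : V k, (((n : ℝ) / 2) * M ^ 2) := by
                rw [Finset.sum_const, nsmul_eq_mul, Finset.card_univ]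
            _ ≤ ∑ x, ∑ y, ‖f ⟨k, x⟩ - f ⟨k, y⟩‖ ^ 2 := Finset.sum_le_sum fun x _ => hterm x
  have hP := hPoincare f k
  have : M ^ 2 / 2 ≤ C * d * A ^ 2 := le_trans hLHS (le_trans hP hRHS)
  rw [hM2] at this
  linarith
end

section
/- Let (X_k)_{k>0} be a sequence of nonempty finite metric spaces, and let d and d' be two metrics on the disjoint union X = ⊔_k X_k, both restricting to the given metric on each X_k, and both satisfying d(X_k, X_ℓ) ≥ diam(X_k) + diam(X_ℓ) and d'(X_k, X_ℓ) ≥ diam(X_k) + diam(X_ℓ) for all k ≠ ℓ. Assume moreover diam(X_k) → ∞. Then the identity map (X, d) → (X, d') is a coarse equivalence: there exist functions ρ₋, ρ₊ : ℝ₊ → ℝ₊ with ρ₋(t) → ∞ such that ρ₋(d(x,y)) ≤ d'(x,y) ≤ ρ₊(d(x,y)) for all x, y ∈ X. -/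
/-!
Points of different pieces at `d`-distance at most `t` lie in pieces of diameter at most `t`.
Since the diameters tend to infinity there are only finitely many such pieces, each of them
finite, so `d'` is bounded on the pairs with `d ≤ t`; on a single piece `d' = d`. This gives
the upper control function, and the same argument with `d` and `d'` exchanged gives the lower
one.
-/

open Filter Set

def BoundedOnSublevels {ι : Type*} (f g : ι → ℝ) : Prop :=
  ∀ t, ∃ M, ∀ i, f i ≤ t → g i ≤ M

namespace BoundedOnSublevels

variable {ι : Type*} {f g : ι → ℝ}

theorem exists_le_comp (h : BoundedOnSublevels f g) : ∃ ρ : ℝ → ℝ, ∀ i, g i ≤ ρ (f i) := by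
  choose ρ hρ using h
  exact ⟨ρ, fun i => hρ _ i le_rfl⟩

theorem exists_tendsto_comp_le (h : BoundedOnSublevels g f) (hg : BddBelow (range g)) :
    ∃ ρ : ℝ → ℝ, Tendsto ρ atTop atTop ∧ ∀ i, ρ (f i) ≤ g i := by
  -- `insert s` keeps the set nonempty, so `sInf` never takes its junk value on `∅`.
  refine ⟨fun s => sInf (insert s (g '' {i | s ≤ f i})), ?_, fun i => ?_⟩
  · refine tendsto_atTop.2 fun b => ?_
    obtain ⟨M, hM⟩ := h b
    filter_upwards [eventually_ge_atTop (max b (M + 1))] with s hs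
    refine le_csInf (insert_nonempty _ _) ?_
    rintro _ (rfl | ⟨i, hi, rfl⟩)
    · exact (le_max_left _ _).trans hs
    · by_contra! hlt
      have hfi := hM i hlt.le
      linarith [le_max_right b (M + 1), show s ≤ f i from hi]
  · exact csInf_le ((hg.mono (image_subset_range _ _)).insert _)
      (mem_insert_of_mem _ ⟨i, le_refl (f i), rfl⟩)

end BoundedOnSublevels

section DisjointUnion

variable {ι : Type*} {X : ι → Type*}

theorem nonneg_of_eq_dist_of_le_sep [∀ k, PseudoMetricSpace (X k)] {δ : ι → ℝ}
    {d : (Σ k, X k) → (Σ k, X k) → ℝ} (hδ : ∀ k, 0 ≤ δ k)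
    (hres : ∀ k (x y : X k), d ⟨k, x⟩ ⟨k, y⟩ = dist x y)
    (hsep : ∀ k l, k ≠ l → ∀ (x : X k) (y : X l), δ k + δ l ≤ d ⟨k, x⟩ ⟨l, y⟩)
    (p q : Σ k, X k) : 0 ≤ d p q := by
  obtain ⟨k, x⟩ := p
  obtain ⟨l, y⟩ := q
  rcases eq_or_ne k l with rfl | hkl
  · exact hres k x y ▸ dist_nonneg
  · exact (add_nonneg (hδ k) (hδ l)).trans (hsep k l hkl x y)

theorem boundedOnSublevels_of_le_sep [∀ k, Finite (X k)] {δ : ι → ℝ}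
    {d d' : (Σ k, X k) → (Σ k, X k) → ℝ} (hδ : ∀ k, 0 ≤ δ k)
    (hδ_tendsto : Tendsto δ cofinite atTop)
    (hres : ∀ k (x y : X k), d' ⟨k, x⟩ ⟨k, y⟩ = d ⟨k, x⟩ ⟨k, y⟩)
    (hsep : ∀ k l, k ≠ l → ∀ (x : X k) (y : X l), δ k + δ l ≤ d ⟨k, x⟩ ⟨l, y⟩) :
    BoundedOnSublevels (fun pq : (Σ k, X k) × (Σ k, X k) => d pq.1 pq.2)
      (fun pq => d' pq.1 pq.2) := by
  intro t
  have hK : {k | δ k ≤ t}.Finite := by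
    simpa only [not_lt] using eventually_cofinite.1 (hδ_tendsto.eventually_gt_atTop t)
  set S : Set (Σ k, X k) := ⋃ k ∈ {k | δ k ≤ t}, range (Sigma.mk k)
  have hS : S.Finite := hK.biUnion fun k _ => finite_range _
  obtain ⟨M, hM⟩ := ((hS.prod hS).image fun pq => d' pq.1 pq.2).bddAbove
  refine ⟨max t M, fun ⟨⟨k, x⟩, ⟨l, y⟩⟩ hpq => ?_⟩
  rcases eq_or_ne k l with rfl | hkl
  · exact (hres k x y).trans_le (hpq.trans (le_max_left _ _))
  · have hkl_sep := (hsep k l hkl x y).trans hpq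
    have hp : (⟨k, x⟩ : Σ k, X k) ∈ S :=
      mem_biUnion (show δ k ≤ t by linarith [hδ l]) ⟨x, rfl⟩
    have hq : (⟨l, y⟩ : Σ k, X k) ∈ S :=
      mem_biUnion (show δ l ≤ t by linarith [hδ k]) ⟨y, rfl⟩
    exact (hM (mem_image_of_mem _ (mk_mem_prod hp hq))).trans (le_max_right _ _)

end DisjointUnion

theorem stmt_9_general {X : ℕ → Type*} [∀ k, MetricSpace (X k)] [∀ k, Fintype (X k)]
    (D D' : (Σ k, X k) → (Σ k, X k) → ℝ)
    (hres : ∀ (k : ℕ) (x y : X k), D ⟨k, x⟩ ⟨k, y⟩ = dist x y)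
    (hres' : ∀ (k : ℕ) (x y : X k), D' ⟨k, x⟩ ⟨k, y⟩ = dist x y)
    (hsep : ∀ (k l : ℕ), k ≠ l → ∀ (x : X k) (y : X l),
      Metric.diam (Set.univ : Set (X k)) + Metric.diam (Set.univ : Set (X l))
        ≤ D ⟨k, x⟩ ⟨l, y⟩)
    (hsep' : ∀ (k l : ℕ), k ≠ l → ∀ (x : X k) (y : X l),
      Metric.diam (Set.univ : Set (X k)) + Metric.diam (Set.univ : Set (X l))
        ≤ D' ⟨k, x⟩ ⟨l, y⟩)
    (hdiam : Tendsto (fun k => Metric.diam (Set.univ : Set (X k))) atTop atTop) :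
    ∃ ρm ρp : ℝ → ℝ, Tendsto ρm atTop atTop ∧
      ∀ p q, ρm (D p q) ≤ D' p q ∧ D' p q ≤ ρp (D p q) := by
  have hdiam_nonneg : ∀ k, 0 ≤ Metric.diam (Set.univ : Set (X k)) := fun _ => Metric.diam_nonneg
  rw [← Nat.cofinite_eq_atTop] at hdiam
  have hresDD' : ∀ k (x y : X k), D' ⟨k, x⟩ ⟨k, y⟩ = D ⟨k, x⟩ ⟨k, y⟩ := by
    intro k x y
    rw [hres, hres']
  obtain ⟨ρp, hρp⟩ :=
    (boundedOnSublevels_of_le_sep hdiam_nonneg hdiam hresDD' hsep).exists_le_comp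
  obtain ⟨ρm, hρm_tendsto, hρm⟩ :=
    (boundedOnSublevels_of_le_sep hdiam_nonneg hdiam (fun k x y => (hresDD' k x y).symm)
      hsep').exists_tendsto_comp_le
      ⟨0, forall_mem_range.2 fun pq =>
        nonneg_of_eq_dist_of_le_sep hdiam_nonneg hres' hsep' pq.1 pq.2⟩
  exact ⟨ρm, ρp, hρm_tendsto, fun p q => ⟨hρm (p, q), hρp (p, q)⟩⟩

/-- Any two coarse disjoint union metrics on the disjoint union of a sequence
of nonempty finite metric spaces with diameters tending to infinity are
coarsely equivalent via the identity map. -/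
theorem stmt_9 {X : ℕ → Type*} [∀ k, MetricSpace (X k)] [∀ k, Fintype (X k)]
    [∀ k, Nonempty (X k)]
    (D D' : (Σ k, X k) → (Σ k, X k) → ℝ)
    (hsymmD : ∀ p q, D p q = D q p) (hzeroD : ∀ p, D p p = 0)
    (htriD : ∀ p q r, D p r ≤ D p q + D q r)
    (hsymmD' : ∀ p q, D' p q = D' q p) (hzeroD' : ∀ p, D' p p = 0)
    (htriD' : ∀ p q r, D' p r ≤ D' p q + D' q r)
    (hres : ∀ (k : ℕ) (x y : X k), D ⟨k, x⟩ ⟨k, y⟩ = dist x y)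
    (hres' : ∀ (k : ℕ) (x y : X k), D' ⟨k, x⟩ ⟨k, y⟩ = dist x y)
    (hsep : ∀ (k l : ℕ), k ≠ l → ∀ (x : X k) (y : X l),
      Metric.diam (Set.univ : Set (X k)) + Metric.diam (Set.univ : Set (X l))
        ≤ D ⟨k, x⟩ ⟨l, y⟩)
    (hsep' : ∀ (k l : ℕ), k ≠ l → ∀ (x : X k) (y : X l),
      Metric.diam (Set.univ : Set (X k)) + Metric.diam (Set.univ : Set (X l))
        ≤ D' ⟨k, x⟩ ⟨l, y⟩)
    (hdiam : Tendsto (fun k => Metric.diam (Set.univ : Set (X k))) atTop atTop) :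
    ∃ ρm ρp : ℝ → ℝ, Tendsto ρm atTop atTop ∧
      ∀ p q, ρm (D p q) ≤ D' p q ∧ D' p q ≤ ρp (D p q) :=
  stmt_9_general D D' hres hres' hsep hsep' hdiam
end

section
/- Let G be a group (with counting measure) acting on a set X, and let f : X → ℝ≥0 be a function such that Σ_{g∈G} f(g⁻¹x) = 1 for every x ∈ X (the sum converging, e.g. f of finite support along each orbit). Define e : X × G → ℝ by e(x, g) = √(f(x) f(g⁻¹x)). Then e is idempotent for the convolution product (a ⋆ b)(x, g) = Σ_{h∈G} a(x, h) b(h⁻¹x, h⁻¹g); that is, (e ⋆ e)(x, g) = e(x, g) for all x ∈ X, g ∈ G. -/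
/-! Each term of the convolution factors as `e(x,g) · f(h⁻¹x)`, because
`√(ab) · √(bc) = b · √(ac)`; summing over `h` and using `Σ_h f(h⁻¹x) = 1` leaves `e(x,g)`. -/

theorem Real.sqrt_mul_mul_sqrt_mul {a b : ℝ} (c : ℝ) (ha : 0 ≤ a) (hb : 0 ≤ b) :
    √(a * b) * √(b * c) = b * √(a * c) := by
  rw [← Real.sqrt_mul (mul_nonneg ha hb), show a * b * (b * c) = b ^ 2 * (a * c) by ring,
    Real.sqrt_mul (sq_nonneg b), Real.sqrt_sq hb]

theorem inv_mul_inv_smul_inv_smul {G X : Type*} [Group G] [MulAction G X] (g h : G) (x : X) :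
    (h⁻¹ * g)⁻¹ • (h⁻¹ • x) = g⁻¹ • x := by
  rw [smul_smul, mul_inv_rev, inv_inv, mul_inv_cancel_right]

theorem stmt_12_general {G X : Type*} [Group G] [MulAction G X] (f : X → ℝ)
    (hf : ∀ x, 0 ≤ f x)
    (hone : ∀ x : X, ∑' g : G, f (g⁻¹ • x) = 1)
    (x : X) (g : G) :
    ∑' h : G, Real.sqrt (f x * f (h⁻¹ • x)) *
        Real.sqrt (f (h⁻¹ • x) * f ((h⁻¹ * g)⁻¹ • (h⁻¹ • x)))
      = Real.sqrt (f x * f (g⁻¹ • x)) := by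
  calc ∑' h : G, Real.sqrt (f x * f (h⁻¹ • x)) *
        Real.sqrt (f (h⁻¹ • x) * f ((h⁻¹ * g)⁻¹ • (h⁻¹ • x)))
      = ∑' h : G, Real.sqrt (f x * f (g⁻¹ • x)) * f (h⁻¹ • x) := by
        refine tsum_congr fun h => ?_
        rw [inv_mul_inv_smul_inv_smul, Real.sqrt_mul_mul_sqrt_mul _ (hf x) (hf _), mul_comm]
    _ = Real.sqrt (f x * f (g⁻¹ • x)) := by rw [tsum_mul_left, hone x, mul_one]

/-- Given a Bruhat function `f` (nonnegative with `Σ_g f(g⁻¹x) = 1` for each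
`x`), the kernel `e(x,g) = √(f(x)·f(g⁻¹x))` is idempotent for the
crossed-product convolution `(a⋆b)(x,g) = Σ_h a(x,h)·b(h⁻¹x, h⁻¹g)`. -/
theorem stmt_12 {G X : Type*} [Group G] [MulAction G X] (f : X → ℝ)
    (hf : ∀ x, 0 ≤ f x)
    (hsum : ∀ x : X, Summable fun g : G => f (g⁻¹ • x))
    (hone : ∀ x : X, ∑' g : G, f (g⁻¹ • x) = 1)
    (x : X) (g : G) :
    ∑' h : G, Real.sqrt (f x * f (h⁻¹ • x)) *
        Real.sqrt (f (h⁻¹ • x) * f ((h⁻¹ * g)⁻¹ • (h⁻¹ • x)))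
      = Real.sqrt (f x * f (g⁻¹ • x)) :=
  stmt_12_general f hf hone x g
end

section
/- Consider the following data in the category of abelian groups: groups T, T_F, A_U, A, A_F, B_U, B, B_F; homomorphisms p : T → T_F, m : T → A, m_F : T_F → A_F, α : A_U → A, β : A → A_F, λ_U : A_U → B_U, λ : A → B, λ_F : A_F → B_F, α' : B_U → B, β' : B → B_F. Assume: (i) the squares commute: β ∘ m = m_F ∘ p, λ ∘ α = α' ∘ λ_U, λ_F ∘ β = β' ∘ λ; (ii) the middle row is exact: ker β = im α; (iii) μ := λ ∘ m : T → B is surjective; (iv) μ_F := λ_F ∘ m_F : T_F → B_F is injective. If moreover β' ∘ α' = 0, then every y ∈ B with β'(y) = 0 lies in the image of α', i.e. ker β' ⊆ im α'. -/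
/-- Diagram chase: with commuting squares, exact middle row, surjective `μ = λ∘m`
and injective `μ_F = λ_F∘m_F`, the bottom row is exact in the middle:
if `β'∘α' = 0`, then every `y` with `β'(y) = 0` lies in the image of `α'`. -/
theorem stmt_16 {T TF AU A AF BU B BF : Type*}
    [AddCommGroup T] [AddCommGroup TF] [AddCommGroup AU] [AddCommGroup A]
    [AddCommGroup AF] [AddCommGroup BU] [AddCommGroup B] [AddCommGroup BF]
    (p : T →+ TF) (m : T →+ A) (mF : TF →+ AF)
    (α : AU →+ A) (β : A →+ AF)
    (lamU : AU →+ BU) (lam : A →+ B) (lamF : AF →+ BF)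
    (α' : BU →+ B) (β' : B →+ BF)
    (hsq1 : ∀ t : T, β (m t) = mF (p t))
    (hsq2 : ∀ u : AU, lam (α u) = α' (lamU u))
    (hsq3 : ∀ a : A, lamF (β a) = β' (lam a))
    (hexact : ∀ a : A, β a = 0 ↔ ∃ u : AU, α u = a)
    (hsurj : Function.Surjective (fun t : T => lam (m t)))
    (hinj : Function.Injective (fun t : TF => lamF (mF t)))
    (hcomp : ∀ u : BU, β' (α' u) = 0) :
    ∀ y : B, β' y = 0 → ∃ u : BU, α' u = y := by
  intro y hy
  obtain ⟨t, ht⟩ := hsurj y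
  have h1 : lamF (mF (p t)) = lamF (mF 0) := by
    simp [← hsq1, hsq3, ht, hy]
  have hpt : p t = 0 := hinj h1
  have hβ : β (m t) = 0 := by rw [hsq1, hpt]; simp
  obtain ⟨u, hu⟩ := (hexact (m t)).mp hβ
  exact ⟨lamU u, by rw [← hsq2, hu]; exact ht⟩
end
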